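/- arXiv:2309.00070 — 6 statements merged into one kernel-verified Lean document; each statement's English description precedes it below -/
import Mathlib

section
/- Let C and D be closed subsets of a normed space X, with 0 ∈ C, and let ε > 0, ρ > 0 and ρ̄ ≥ 2ρ. If C ∩ {x : ‖x‖ ≤ ρ̄} ⊆ D + εB, then dist(x, D) ≤ dist(x, C) + ε for all x with ‖x‖ ≤ ρ. -/
open Pointwise Metric

section

variable {E : Type*} [SeminormedAddCommGroup E]

theorem Metric.infDist_le_dist_add_of_mem_add_closedBall {D : Set E} {ε : ℝ} {y : E}
    (hy : y ∈ D + closedBall (0 : E) ε) (z : E) : infDist z D ≤ dist z y + ε := by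
  obtain ⟨a, ha, b, hb, rfl⟩ := hy
  have hba : dist (a + b) a ≤ ε := by simpa [dist_eq_norm] using hb
  calc infDist z D ≤ dist z a := infDist_le_dist_of_mem ha
    _ ≤ dist z (a + b) + dist (a + b) a := dist_triangle _ _ _
    _ ≤ dist z (a + b) + ε := by gcongr

theorem Metric.infDist_le_infDist_add_of_subset_add_closedBall {A D : Set E} {ε : ℝ}
    (hA : A.Nonempty) (hAD : A ⊆ D + closedBall (0 : E) ε) (x : E) :
    infDist x D ≤ infDist x A + ε := by
  have : infDist x D - ε ≤ infDist x A :=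
    (le_infDist hA).2 fun y hy ↦ by
      linarith [infDist_le_dist_add_of_mem_add_closedBall (hAD hy) x]
  linarith

/-- Points of `C` of norm `> R ≥ 2ρ` are farther from `x` than `0 ∈ C` is. -/
theorem Metric.infDist_inter_norm_le_eq {C : Set E} (h0C : (0 : E) ∈ C) {x : E} {ρ R : ℝ}
    (hx : ‖x‖ ≤ ρ) (hR : 2 * ρ ≤ R) :
    infDist x (C ∩ {y | ‖y‖ ≤ R}) = infDist x C := by
  have h0 : (0 : E) ∈ C ∩ {y | ‖y‖ ≤ R} :=
    ⟨h0C, norm_zero.trans_le (by linarith [norm_nonneg x])⟩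
  refine le_antisymm ((le_infDist ⟨0, h0C⟩).2 fun y hy ↦ ?_)
    (infDist_le_infDist_of_subset Set.inter_subset_left ⟨0, h0⟩)
  by_cases hyR : ‖y‖ ≤ R
  · exact infDist_le_dist_of_mem ⟨hy, hyR⟩
  · calc infDist x (C ∩ {y | ‖y‖ ≤ R}) ≤ dist x 0 := infDist_le_dist_of_mem h0
      _ ≤ dist x y := by
        rw [dist_zero_right, dist_eq_norm]
        linarith [norm_sub_norm_le y x, norm_sub_rev y x]

end

theorem stmt1_general {X : Type*} [NormedAddCommGroup X] [NormedSpace ℝ X]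
    (C D : Set X) (h0C : (0 : X) ∈ C)
    (ε ρ ρbar : ℝ) (hε : 0 < ε) (hρbar : 2 * ρ ≤ ρbar)
    (h : C ∩ {x : X | ‖x‖ ≤ ρbar} ⊆ D + ε • Metric.closedBall (0 : X) 1) :
    ∀ x : X, ‖x‖ ≤ ρ → Metric.infDist x D ≤ Metric.infDist x C + ε := by
  intro x hx
  rw [smul_unitClosedBall_of_nonneg hε.le] at h
  have h0 : (0 : X) ∈ C ∩ {x : X | ‖x‖ ≤ ρbar} :=
    ⟨h0C, norm_zero.trans_le (by linarith [norm_nonneg x])⟩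
  rw [← infDist_inter_norm_le_eq h0C hx hρbar]
  exact infDist_le_infDist_add_of_subset_add_closedBall ⟨0, h0⟩ h x

/-- Let C and D be closed subsets of a normed space X, with 0 ∈ C, and let
ε > 0, ρ > 0 and ρ̄ ≥ 2ρ.  If C ∩ {x : ‖x‖ ≤ ρ̄} ⊆ D + εB, then
dist(x, D) ≤ dist(x, C) + ε for all x with ‖x‖ ≤ ρ. -/
theorem stmt1 {X : Type*} [NormedAddCommGroup X] [NormedSpace ℝ X]
    (C D : Set X) (hC : IsClosed C) (hD : IsClosed D) (h0C : (0 : X) ∈ C)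
    (ε ρ ρbar : ℝ) (hε : 0 < ε) (hρ : 0 < ρ) (hρbar : 2 * ρ ≤ ρbar)
    (h : C ∩ {x : X | ‖x‖ ≤ ρbar} ⊆ D + ε • Metric.closedBall (0 : X) 1) :
    ∀ x : X, ‖x‖ ≤ ρ → Metric.infDist x D ≤ Metric.infDist x C + ε :=
  stmt1_general C D h0C ε ρ ρbar hε hρbar h
end

section
/- Let f, g be usc functions from S to [0,1] with 0 ∈ S. Then for every ρ ≥ 0, the hat-distance and the truncated ρ-distance satisfy d̂l_ρ(f, g) ≤ dl_ρ(f, g) ≤ d̂l_{2ρ}(f, g). -/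
/-!
Both hypographs are closed and contain the origin. For `x̄ ∈ hypo f ∩ ρ𝕊` the quantity
`|dist(x̄, hypo f) − dist(x̄, hypo g)|` is just `dist(x̄, hypo g)`, and a nearest point of the
closed set `hypo g` exhibits `x̄ ∈ hypo g + dl_ρ 𝕊`; this gives `d̂l_ρ ≤ dl_ρ`.
Conversely, if `‖x̄‖ ≤ ρ` and `q` is a nearest point of `hypo f`, then `‖x̄ - q‖ ≤ ‖x̄‖ ≤ ρ`
because `0 ∈ hypo f`, so `q ∈ hypo f ∩ 2ρ𝕊` lies within `η` of `hypo g` for every `η`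
admissible in `d̂l_{2ρ}`, whence `dist(x̄, hypo g) ≤ dist(x̄, hypo f) + η`.
-/

open Metric Set Filter Pointwise

/-- The hypograph of `f` restricted to `S`, as a subset of `(Fin m → ℝ) × ℝ`
(carrying the max-norm, since both the `Pi` and `Prod` norms are sup-norms). -/
def hypo {m : ℕ} (S : Set (Fin m → ℝ)) (f : (Fin m → ℝ) → ℝ) :
    Set ((Fin m → ℝ) × ℝ) :=
  {p | p.1 ∈ S ∧ p.2 ≤ f p.1}

/-- The truncated ρ-hypo-distance
`dl_ρ(f,g) = sup { |dist(x̄, hypo f) − dist(x̄, hypo g)| : ‖x̄‖ ≤ ρ }`. -/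
noncomputable def dlrho {m : ℕ} (S : Set (Fin m → ℝ)) (f g : (Fin m → ℝ) → ℝ)
    (ρ : ℝ) : ℝ :=
  sSup ((fun p => |Metric.infDist p (hypo S f) - Metric.infDist p (hypo S g)|) ''
    {p : (Fin m → ℝ) × ℝ | ‖p‖ ≤ ρ})

/-- The hypo-distance `dl(f,g) = ∫₀^∞ dl_ρ(f,g) e^{−ρ} dρ`. -/
noncomputable def dl {m : ℕ} (S : Set (Fin m → ℝ)) (f g : (Fin m → ℝ) → ℝ) : ℝ :=
  ∫ ρ in Set.Ioi (0 : ℝ), dlrho S f g ρ * Real.exp (-ρ)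

/-- The Attouch–Wets hat-distance
`d̂l_ρ(f,g) = inf{η ≥ 0 : hypo f ∩ ρ𝕊 ⊆ hypo g + η𝕊 and hypo g ∩ ρ𝕊 ⊆ hypo f + η𝕊}`. -/
noncomputable def hatdl {m : ℕ} (S : Set (Fin m → ℝ)) (f g : (Fin m → ℝ) → ℝ)
    (ρ : ℝ) : ℝ :=
  sInf {η : ℝ | 0 ≤ η ∧
    hypo S f ∩ Metric.closedBall (0 : (Fin m → ℝ) × ℝ) ρ ⊆ hypo S g + Metric.closedBall (0 : (Fin m → ℝ) × ℝ) η ∧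
    hypo S g ∩ Metric.closedBall (0 : (Fin m → ℝ) × ℝ) ρ ⊆ hypo S f + Metric.closedBall (0 : (Fin m → ℝ) × ℝ) η}


section NormedGroup

variable {E : Type*} [NormedAddCommGroup E] {F G : Set E}

theorem infDist_le_norm_of_zero_mem (h0 : (0 : E) ∈ F) (p : E) : infDist p F ≤ ‖p‖ := by
  simpa only [dist_zero_right] using infDist_le_dist_of_mem (x := p) h0

theorem infDist_le_of_mem_add_closedBall {q : E} {η : ℝ} (hq : q ∈ G + closedBall 0 η) :
    infDist q G ≤ η := by
  obtain ⟨a, ha, e, he, rfl⟩ := hq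
  calc infDist (a + e) G ≤ dist (a + e) a := infDist_le_dist_of_mem ha
    _ = ‖e‖ := by rw [dist_eq_norm, add_sub_cancel_left]
    _ ≤ η := mem_closedBall_zero_iff.mp he

variable [ProperSpace E]

theorem subset_add_closedBall_of_forall_infDist_le (hG : IsClosed G) (hGne : G.Nonempty)
    {A : Set E} {η : ℝ} (h : ∀ p ∈ A, infDist p G ≤ η) : A ⊆ G + closedBall 0 η := by
  intro p hp
  obtain ⟨q, hqG, hq⟩ := hG.exists_infDist_eq_dist hGne p
  refine ⟨q, hqG, p - q, ?_, add_sub_cancel q p⟩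
  rw [mem_closedBall_zero_iff, ← dist_eq_norm, ← hq]
  exact h p hp

theorem infDist_le_infDist_add_of_inter_closedBall_subset (hF : IsClosed F) (h0F : (0 : E) ∈ F)
    {p : E} {ρ η : ℝ} (hp : ‖p‖ ≤ ρ) (h : F ∩ closedBall 0 (2 * ρ) ⊆ G + closedBall 0 η) :
    infDist p G ≤ infDist p F + η := by
  obtain ⟨q, hqF, hq⟩ := hF.exists_infDist_eq_dist ⟨0, h0F⟩ p
  have hpq : dist p q ≤ ‖p‖ := hq ▸ infDist_le_norm_of_zero_mem h0F p
  have hq_mem : q ∈ closedBall (0 : E) (2 * ρ) := by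
    rw [mem_closedBall_zero_iff]
    calc ‖q‖ ≤ ‖p‖ + dist p q := by
          simpa only [dist_zero_right, add_comm] using dist_triangle_left q 0 p
      _ ≤ 2 * ρ := by linarith
  calc infDist p G ≤ infDist q G + dist p q := infDist_le_infDist_add_dist
    _ ≤ η + infDist p F := by
        rw [hq]; gcongr; exact infDist_le_of_mem_add_closedBall (h ⟨hqF, hq_mem⟩)
    _ = infDist p F + η := add_comm _ _

end NormedGroup

section Hypograph

variable {m : ℕ} {S : Set (Fin m → ℝ)} {f g : (Fin m → ℝ) → ℝ}

theorem isClosed_hypo (hS : IsClosed S) (hf : UpperSemicontinuousOn f S) :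
    IsClosed (hypo S f) :=
  (upperSemicontinuousOn_iff_isClosed_hypograph hS).mp hf

theorem hypo_subset_add_closedBall_one (hf : ∀ x ∈ S, f x ≤ 1) (hg : ∀ x ∈ S, 0 ≤ g x) :
    hypo S f ⊆ hypo S g + closedBall 0 1 := by
  rintro ⟨x, α⟩ ⟨hx, hα⟩
  refine ⟨(x, min α (g x)), ⟨hx, min_le_right _ _⟩, (0, α - min α (g x)), ?_, by simp⟩
  have hf1 := hf x hx
  have hg0 := hg x hx
  rw [mem_closedBall_zero_iff, Prod.norm_def, norm_zero, Real.norm_eq_abs,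
    abs_of_nonneg (sub_nonneg.mpr (min_le_left _ _))]
  exact max_le zero_le_one (by rcases min_cases α (g x) with h | h <;> linarith [h.1])

theorem hatdl_le {ρ η : ℝ} (hη : 0 ≤ η)
    (hfg : hypo S f ∩ closedBall 0 ρ ⊆ hypo S g + closedBall 0 η)
    (hgf : hypo S g ∩ closedBall 0 ρ ⊆ hypo S f + closedBall 0 η) :
    hatdl S f g ρ ≤ η :=
  csInf_le ⟨0, fun _ h => h.1⟩ ⟨hη, hfg, hgf⟩

theorem le_hatdl (hf01 : ∀ x ∈ S, f x ∈ Icc (0 : ℝ) 1) (hg01 : ∀ x ∈ S, g x ∈ Icc (0 : ℝ) 1)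
    {ρ c : ℝ} (h : ∀ η, 0 ≤ η → hypo S f ∩ closedBall 0 ρ ⊆ hypo S g + closedBall 0 η →
      hypo S g ∩ closedBall 0 ρ ⊆ hypo S f + closedBall 0 η → c ≤ η) :
    c ≤ hatdl S f g ρ := by
  refine le_csInf ⟨1, zero_le_one, ?_, ?_⟩ fun η hη => h η hη.1 hη.2.1 hη.2.2
  · exact inter_subset_left.trans <|
      hypo_subset_add_closedBall_one (fun x hx => (hf01 x hx).2) (fun x hx => (hg01 x hx).1)
  · exact inter_subset_left.trans <|
      hypo_subset_add_closedBall_one (fun x hx => (hg01 x hx).2) (fun x hx => (hf01 x hx).1)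

theorem le_dlrho (h0f : (0 : (Fin m → ℝ) × ℝ) ∈ hypo S f) (h0g : (0 : (Fin m → ℝ) × ℝ) ∈ hypo S g)
    {ρ : ℝ} {p : (Fin m → ℝ) × ℝ} (hp : ‖p‖ ≤ ρ) :
    |infDist p (hypo S f) - infDist p (hypo S g)| ≤ dlrho S f g ρ := by
  refine le_csSup ⟨ρ, ?_⟩ ⟨p, hp, rfl⟩
  rintro _ ⟨q, hq, rfl⟩
  exact abs_sub_le_of_nonneg_of_le infDist_nonneg
    ((infDist_le_norm_of_zero_mem h0f q).trans hq) infDist_nonneg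
    ((infDist_le_norm_of_zero_mem h0g q).trans hq)

theorem dlrho_le {ρ c : ℝ} (hc : 0 ≤ c)
    (h : ∀ p : (Fin m → ℝ) × ℝ, ‖p‖ ≤ ρ → |infDist p (hypo S f) - infDist p (hypo S g)| ≤ c) :
    dlrho S f g ρ ≤ c :=
  Real.sSup_le (by rintro _ ⟨p, hp, rfl⟩; exact h p hp) hc

theorem hatdl_le_dlrho (hfc : IsClosed (hypo S f)) (hgc : IsClosed (hypo S g))
    (h0f : (0 : (Fin m → ℝ) × ℝ) ∈ hypo S f) (h0g : (0 : (Fin m → ℝ) × ℝ) ∈ hypo S g)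
    {ρ : ℝ} (hρ : 0 ≤ ρ) :
    hatdl S f g ρ ≤ dlrho S f g ρ := by
  have hdl : ∀ p ∈ closedBall 0 ρ,
      |infDist p (hypo S f) - infDist p (hypo S g)| ≤ dlrho S f g ρ :=
    fun p hp => le_dlrho h0f h0g (mem_closedBall_zero_iff.mp hp)
  refine hatdl_le ((abs_nonneg _).trans (hdl 0 (mem_closedBall_self hρ))) ?_ ?_
  · refine subset_add_closedBall_of_forall_infDist_le hgc ⟨0, h0g⟩ fun p ⟨hpf, hp⟩ => ?_
    simpa only [infDist_zero_of_mem hpf, zero_sub, abs_neg, abs_of_nonneg infDist_nonneg]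
      using hdl p hp
  · refine subset_add_closedBall_of_forall_infDist_le hfc ⟨0, h0f⟩ fun p ⟨hpg, hp⟩ => ?_
    simpa only [infDist_zero_of_mem hpg, sub_zero, abs_of_nonneg infDist_nonneg]
      using hdl p hp

theorem dlrho_le_hatdl_two_mul (hfc : IsClosed (hypo S f)) (hgc : IsClosed (hypo S g))
    (h0f : (0 : (Fin m → ℝ) × ℝ) ∈ hypo S f) (h0g : (0 : (Fin m → ℝ) × ℝ) ∈ hypo S g)
    (hf01 : ∀ x ∈ S, f x ∈ Icc (0 : ℝ) 1) (hg01 : ∀ x ∈ S, g x ∈ Icc (0 : ℝ) 1) (ρ : ℝ) :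
    dlrho S f g ρ ≤ hatdl S f g (2 * ρ) := by
  refine dlrho_le (le_hatdl hf01 hg01 fun η hη _ _ => hη) fun p hp => ?_
  refine le_hatdl hf01 hg01 fun η _ hfg hgf => abs_sub_le_iff.mpr ⟨?_, ?_⟩
  · linarith [infDist_le_infDist_add_of_inter_closedBall_subset hgc h0g hp hgf]
  · linarith [infDist_le_infDist_add_of_inter_closedBall_subset hfc h0f hp hfg]

end Hypograph

/-- Let f, g be usc functions from S to [0,1] with 0 ∈ S.  Then for every
ρ ≥ 0, the hat-distance and truncated ρ-distance satisfy
d̂l_ρ(f,g) ≤ dl_ρ(f,g) ≤ d̂l_{2ρ}(f,g). -/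
theorem stmt5 {m : ℕ} (S : Set (Fin m → ℝ)) (hS : IsClosed S)
    (h0S : (0 : Fin m → ℝ) ∈ S) (f g : (Fin m → ℝ) → ℝ)
    (hf : UpperSemicontinuousOn f S) (hg : UpperSemicontinuousOn g S)
    (hf01 : ∀ x ∈ S, f x ∈ Set.Icc (0 : ℝ) 1) (hg01 : ∀ x ∈ S, g x ∈ Set.Icc (0 : ℝ) 1) :
    ∀ ρ : ℝ, 0 ≤ ρ →
      hatdl S f g ρ ≤ dlrho S f g ρ ∧ dlrho S f g ρ ≤ hatdl S f g (2 * ρ) := by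
  intro ρ hρ
  have hfc := isClosed_hypo hS hf
  have hgc := isClosed_hypo hS hg
  have h0f : (0 : (Fin m → ℝ) × ℝ) ∈ hypo S f := ⟨h0S, (hf01 0 h0S).1⟩
  have h0g : (0 : (Fin m → ℝ) × ℝ) ∈ hypo S g := ⟨h0S, (hg01 0 h0S).1⟩
  exact ⟨hatdl_le_dlrho hfc hgc h0f h0g hρ, dlrho_le_hatdl_two_mul hfc hgc h0f h0g hf01 hg01 ρ⟩
end

section
/- Let F^ν : S → [0,1] be usc and suppose each F^ν satisfies lim_{x → b} F^ν(x) = 1, where b = (β₁,…,β_m) is the upper corner of the compact rectangle S. If F^ν hypo-converges to F, then lim_{x → b} F(x) = 1, i.e., F(b) = 1 if F is usc and nondecreasing. -/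
/-!
Since `b` lies in the box, `F^ν → 1` at `b` within the box forces `F^ν(b) = 1`. The limsup
half of hypo-convergence, applied to the constant sequence at `b`, then gives `F(b) ≥ 1`,
while `F ≤ 1` on the box.
-/

open Filter Set Topology

/-- Sequential characterization of hypo-convergence of `[0,1]`-valued functions on `S`:
(a) `limsup_ν F^ν(x^ν) ≤ f(x)` for every sequence `x^ν → x` in `S`, and
(b) for every `x ∈ S` there is a sequence `x^ν → x` in `S` with
`liminf_ν F^ν(x^ν) ≥ f(x)`. -/
def HypoConv {X : Type*} [MetricSpace X] (S : Set X) (F : ℕ → X → ℝ) (f : X → ℝ) : Prop :=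
  (∀ x ∈ S, ∀ xs : ℕ → X, (∀ ν, xs ν ∈ S) → Filter.Tendsto xs Filter.atTop (nhds x) →
    Filter.limsup (fun ν => F ν (xs ν)) Filter.atTop ≤ f x) ∧
  (∀ x ∈ S, ∃ xs : ℕ → X, (∀ ν, xs ν ∈ S) ∧ Filter.Tendsto xs Filter.atTop (nhds x) ∧
    f x ≤ Filter.liminf (fun ν => F ν (xs ν)) Filter.atTop)

/-- The closed box `[α₁,β₁] × ⋯ × [α_m,β_m]`. -/
def closedBox {m : ℕ} (α β : Fin m → ℝ) : Set (Fin m → ℝ) :=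
  {x | ∀ i, α i ≤ x i ∧ x i ≤ β i}

theorem eq_of_tendsto_nhdsWithin_of_mem {X Y : Type*} [TopologicalSpace X] [TopologicalSpace Y]
    [T1Space Y] {f : X → Y} {s : Set X} {a : X} {c : Y} (h : Tendsto f (𝓝[s] a) (𝓝 c))
    (ha : a ∈ s) : f a = c :=
  pure_le_nhds_iff.mp (h.mono_left (pure_le_nhdsWithin ha))

theorem HypoConv.limsup_le {X : Type*} [MetricSpace X] {S : Set X} {F : ℕ → X → ℝ} {f : X → ℝ}
    (hF : HypoConv S F f) {x : X} (hx : x ∈ S) :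
    limsup (fun ν => F ν x) atTop ≤ f x :=
  hF.1 x hx (fun _ => x) (fun _ => hx) tendsto_const_nhds

theorem upper_mem_closedBox {m : ℕ} {α β : Fin m → ℝ} (hαβ : ∀ i, α i ≤ β i) :
    β ∈ closedBox α β :=
  fun i => ⟨hαβ i, le_rfl⟩

theorem stmt11_general {m : ℕ} (α β : Fin m → ℝ) (hαβ : ∀ i, α i ≤ β i)
    (F : ℕ → (Fin m → ℝ) → ℝ) (Flim : (Fin m → ℝ) → ℝ)
    (hlim1 : ∀ ν, Filter.Tendsto (F ν) (nhdsWithin β (closedBox α β)) (nhds 1))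
    (hconv : HypoConv (closedBox α β) F Flim)
    (hlim01 : ∀ x ∈ closedBox α β, Flim x ∈ Set.Icc (0 : ℝ) 1) :
    Flim β = 1 := by
  have hβ : β ∈ closedBox α β := upper_mem_closedBox hαβ
  have hFβ : ∀ ν, F ν β = 1 := fun ν => eq_of_tendsto_nhdsWithin_of_mem (hlim1 ν) hβ
  have hge : 1 ≤ Flim β := by
    simpa only [hFβ, limsup_const] using hconv.limsup_le hβ
  exact le_antisymm (hlim01 β hβ).2 hge

/-- Let F^ν : S → [0,1] be usc on the compact rectangle
S = [α₁,β₁] × ⋯ × [α_m,β_m] with lim_{x→b} F^ν(x) = 1 at the upper corner b = β.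
If F^ν hypo-converges to F, which is usc and nondecreasing with values in [0,1],
then F(b) = 1. -/
theorem stmt11 {m : ℕ} (α β : Fin m → ℝ) (hαβ : ∀ i, α i ≤ β i)
    (F : ℕ → (Fin m → ℝ) → ℝ) (Flim : (Fin m → ℝ) → ℝ)
    (husc : ∀ ν, UpperSemicontinuousOn (F ν) (closedBox α β))
    (h01 : ∀ ν, ∀ x ∈ closedBox α β, F ν x ∈ Set.Icc (0 : ℝ) 1)
    (hlim1 : ∀ ν, Filter.Tendsto (F ν) (nhdsWithin β (closedBox α β)) (nhds 1))
    (hconv : HypoConv (closedBox α β) F Flim)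
    (hlimusc : UpperSemicontinuousOn Flim (closedBox α β))
    (hlimmono : MonotoneOn Flim (closedBox α β))
    (hlim01 : ∀ x ∈ closedBox α β, Flim x ∈ Set.Icc (0 : ℝ) 1) :
    Flim β = 1 :=
  stmt11_general α β hαβ F Flim hlim1 hconv hlim01
end

section
/- There exists a sequence of nondecreasing usc functions F^ν : [0,1]² → [0,1], each satisfying the distribution condition Δ_A F^ν ≥ 0 for a fixed rectangle A, which hypo-converges to a nondecreasing usc function F with Δ_A F = −1 < 0. Hence the set of usc nondecreasing functions satisfying the distribution condition is not closed under hypo-convergence. -/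
open Filter Set

/-! The functions `F^ν` are indicators of the closed upper sets
`L_ε = [ε,∞) × [1,∞) ∪ [1,∞) × [ε,∞)` with `ε = 1/(ν+1)`, and `A = [0,1]²`.
For `ε > 0` the only corner of `A` in `L_ε` is `(1,1)`, so `Δ_A F^ν = 1`.
As `ε ↓ 0` the sets `L_ε` increase to the closed set `L_0`, whose indicator is therefore
their hypo-limit; but `L_0` contains the three corners `(1,1)`, `(0,1)`, `(1,0)`,
so `Δ_A F = 1 - 1 - 1 + 0 = -1`. -/

open Topology

section Indicator

variable {α : Type*}

lemma indicator_one_mem_Icc (s : Set α) (a : α) : s.indicator (fun _ => (1 : ℝ)) a ∈ Icc 0 1 := by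
  by_cases ha : a ∈ s <;> simp [ha]

lemma IsUpperSet.monotone_indicator_one [Preorder α] {s : Set α} (hs : IsUpperSet s) :
    Monotone (s.indicator fun _ => (1 : ℝ)) := fun _ _ hab =>
  Set.indicator_apply_le' (fun ha => (Set.indicator_of_mem (hs hab ha) (fun _ => (1 : ℝ))).ge)
    (fun _ => Set.indicator_nonneg (fun _ _ => zero_le_one) _)

end Indicator

section HypoConv

variable {X : Type*} [MetricSpace X] {S : Set X}

lemma HypoConv.of_eventually {F : ℕ → X → ℝ} {f : X → ℝ} {m M : ℝ}
    (hm : ∀ ν x, m ≤ F ν x) (hM : ∀ ν x, F ν x ≤ M)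
    (hsup : ∀ x ∈ S, ∀ xs : ℕ → X, (∀ ν, xs ν ∈ S) → Tendsto xs atTop (𝓝 x) →
      ∀ᶠ ν in atTop, F ν (xs ν) ≤ f x)
    (hinf : ∀ x ∈ S, ∃ xs : ℕ → X, (∀ ν, xs ν ∈ S) ∧ Tendsto xs atTop (𝓝 x) ∧
      ∀ᶠ ν in atTop, f x ≤ F ν (xs ν)) :
    HypoConv S F f := by
  refine ⟨fun x hx xs hxs hlim => ?_, fun x hx => ?_⟩
  · exact limsup_le_of_le (isCoboundedUnder_le_of_le atTop fun ν => hm ν (xs ν))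
      (hsup x hx xs hxs hlim)
  · obtain ⟨xs, hxs, hlim, hev⟩ := hinf x hx
    exact ⟨xs, hxs, hlim, le_liminf_of_le (isCoboundedUnder_ge_of_le atTop fun ν => hM ν (xs ν)) hev⟩

lemma hypoConv_indicator_one {C : ℕ → Set X} {D : Set X} (hsub : ∀ ν, C ν ⊆ D)
    (hD : IsClosed D)
    (hrec : ∀ x ∈ S ∩ D, ∃ xs : ℕ → X, (∀ ν, xs ν ∈ S) ∧ Tendsto xs atTop (𝓝 x) ∧
      ∀ᶠ ν in atTop, xs ν ∈ C ν) :
    HypoConv S (fun ν => (C ν).indicator fun _ => 1) (D.indicator fun _ => 1) := by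
  refine .of_eventually (fun ν x => (indicator_one_mem_Icc (C ν) x).1)
    (fun ν x => (indicator_one_mem_Icc (C ν) x).2) (fun x _ xs _ hlim => ?_) (fun x hx => ?_)
  · by_cases hxD : x ∈ D
    · exact .of_forall fun ν => by
        simpa [hxD] using (indicator_one_mem_Icc (C ν) (xs ν)).2
    · filter_upwards [hlim.eventually (hD.isOpen_compl.mem_nhds hxD)] with ν hν
      simp [hxD, Set.indicator_of_notMem (fun h => hν (hsub ν h))]
  · by_cases hxD : x ∈ D
    · obtain ⟨xs, hxs, hlim, hev⟩ := hrec x ⟨hx, hxD⟩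
      refine ⟨xs, hxs, hlim, ?_⟩
      filter_upwards [hev] with ν hν
      simp [hxD, hν]
    · exact ⟨fun _ => x, fun _ => hx, tendsto_const_nhds, .of_forall fun ν => by
        simpa [hxD] using (indicator_one_mem_Icc (C ν) x).1⟩

end HypoConv

def lShape (ε : ℝ) : Set (ℝ × ℝ) := {z | ε ≤ z.1 ∧ 1 ≤ z.2 ∨ 1 ≤ z.1 ∧ ε ≤ z.2}

lemma isClosed_lShape (ε : ℝ) : IsClosed (lShape ε) :=
  ((isClosed_le continuous_const continuous_fst).inter
    (isClosed_le continuous_const continuous_snd)).union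
  ((isClosed_le continuous_const continuous_fst).inter
    (isClosed_le continuous_const continuous_snd))

lemma isUpperSet_lShape (ε : ℝ) : IsUpperSet (lShape ε) := by
  rintro z w ⟨h₁, h₂⟩ (⟨a, b⟩ | ⟨a, b⟩)
  · exact .inl ⟨a.trans h₁, b.trans h₂⟩
  · exact .inr ⟨a.trans h₁, b.trans h₂⟩

lemma antitone_lShape : Antitone lShape := by
  rintro ε δ hεδ z (⟨a, b⟩ | ⟨a, b⟩)
  · exact .inl ⟨hεδ.trans a, b⟩
  · exact .inr ⟨a, hεδ.trans b⟩

lemma sup_mem_lShape {z : ℝ × ℝ} (hz : z ∈ lShape 0) (ε : ℝ) : z ⊔ (ε, ε) ∈ lShape ε := by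
  rcases hz with ⟨-, b⟩ | ⟨a, -⟩
  · exact .inl ⟨le_sup_right, b.trans le_sup_left⟩
  · exact .inr ⟨a.trans le_sup_left, le_sup_right⟩

lemma hypoConv_lShape {ε : ℕ → ℝ} (hε : ∀ ν, ε ν ∈ Icc 0 1) (hlim : Tendsto ε atTop (𝓝 0)) :
    HypoConv (Icc (0, 0) (1, 1)) (fun ν => (lShape (ε ν)).indicator fun _ => 1)
      ((lShape 0).indicator fun _ => 1) := by
  refine hypoConv_indicator_one (fun ν => antitone_lShape (hε ν).1) (isClosed_lShape 0) ?_
  rintro z ⟨⟨hz0, hz1⟩, hzL⟩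
  refine ⟨fun ν => z ⊔ (ε ν, ε ν), fun ν => ⟨le_sup_of_le_left hz0, sup_le hz1 ?_⟩, ?_,
    .of_forall fun ν => sup_mem_lShape hzL (ε ν)⟩
  · exact Prod.mk_le_mk.2 ⟨(hε ν).2, (hε ν).2⟩
  · have hsup := ((tendsto_const_nhds (x := z.1)).sup_nhds hlim).prodMk_nhds
      ((tendsto_const_nhds (x := z.2)).sup_nhds hlim)
    simpa [sup_eq_left.2 hz0.1, sup_eq_left.2 hz0.2, Prod.sup_def] using hsup

/-- There is a rectangle A = [x₁,x₂] × [y₁,y₂] ⊆ [0,1]² and a sequence of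
nondecreasing usc functions F^ν : [0,1]² → [0,1], each satisfying the distribution
condition Δ_A F^ν ≥ 0, which hypo-converges to a nondecreasing usc function F with
Δ_A F = −1 < 0.  Hence the set of usc nondecreasing functions satisfying the distribution
condition is not closed under hypo-convergence. -/
theorem stmt12 :
    ∃ (x₁ x₂ y₁ y₂ : ℝ), x₁ ∈ Set.Icc (0:ℝ) 1 ∧ x₂ ∈ Set.Icc (0:ℝ) 1 ∧
      y₁ ∈ Set.Icc (0:ℝ) 1 ∧ y₂ ∈ Set.Icc (0:ℝ) 1 ∧ x₁ ≤ x₂ ∧ y₁ < y₂ ∧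
    ∃ (F : ℕ → ℝ × ℝ → ℝ) (Flim : ℝ × ℝ → ℝ),
      (∀ ν, MonotoneOn (F ν) (Set.Icc ((0:ℝ), (0:ℝ)) ((1:ℝ), (1:ℝ)))) ∧
      (∀ ν, UpperSemicontinuousOn (F ν) (Set.Icc ((0:ℝ), (0:ℝ)) ((1:ℝ), (1:ℝ)))) ∧
      (∀ ν, ∀ p ∈ Set.Icc ((0:ℝ), (0:ℝ)) ((1:ℝ), (1:ℝ)), F ν p ∈ Set.Icc (0:ℝ) 1) ∧
      (∀ ν, 0 ≤ F ν (x₂, y₂) - F ν (x₁, y₂) - F ν (x₂, y₁) + F ν (x₁, y₁)) ∧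
      HypoConv (Set.Icc ((0:ℝ), (0:ℝ)) ((1:ℝ), (1:ℝ))) F Flim ∧
      MonotoneOn Flim (Set.Icc ((0:ℝ), (0:ℝ)) ((1:ℝ), (1:ℝ))) ∧
      UpperSemicontinuousOn Flim (Set.Icc ((0:ℝ), (0:ℝ)) ((1:ℝ), (1:ℝ))) ∧
      (∀ p ∈ Set.Icc ((0:ℝ), (0:ℝ)) ((1:ℝ), (1:ℝ)), Flim p ∈ Set.Icc (0:ℝ) 1) ∧
      Flim (x₂, y₂) - Flim (x₁, y₂) - Flim (x₂, y₁) + Flim (x₁, y₁) = -1 := by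
  set ε : ℕ → ℝ := fun ν => 1 / (ν + 1)
  have hε : ∀ ν, ε ν ∈ Icc 0 1 := fun ν =>
    ⟨by positivity, div_le_one_of_le₀ (by linarith [ν.cast_nonneg (α := ℝ)]) (by positivity)⟩
  refine ⟨0, 1, 0, 1, by norm_num, by norm_num, by norm_num, by norm_num, zero_le_one,
    zero_lt_one, fun ν => (lShape (ε ν)).indicator fun _ => 1, (lShape 0).indicator fun _ => 1,
    fun ν => (isUpperSet_lShape _).monotone_indicator_one.monotoneOn _,
    fun ν => (isClosed_lShape _).upperSemicontinuousOn_indicator zero_le_one,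
    fun ν p _ => indicator_one_mem_Icc _ p, fun ν => ?_,
    hypoConv_lShape hε tendsto_one_div_add_atTop_nhds_zero_nat,
    (isUpperSet_lShape 0).monotone_indicator_one.monotoneOn _,
    (isClosed_lShape 0).upperSemicontinuousOn_indicator zero_le_one,
    fun p _ => indicator_one_mem_Icc _ p, ?_⟩
  · have hε₀ : ¬ ε ν ≤ 0 := not_le.2 (by positivity)
    simp [lShape, hε₀, (hε ν).2]
  · norm_num [lShape]
end

section
/- Let A be a rectangle in S with vertices v₁,…,v_{2^m}, partitioned into A⁺ (sign +1) and A⁻ (sign −1). Suppose F^ν : S → [0,1] are usc, equi-usc at every vertex in A⁻, satisfy Δ_A F^ν ≥ 0 for all ν, and hypo-converge to F. Then Δ_A F ≥ 0. -/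
/-!
At a vertex of sign `+1`, testing hypo-convergence against the constant sequence gives
`F^ν(v) ≤ F(v) + e` eventually. At a vertex of sign `−1`, hypo-convergence provides a recovery
sequence `x^ν → v` with `F(v) - e ≤ F^ν(x^ν)` eventually, and equi-upper-semicontinuity at `v`
moves this back to `v` itself. Hence every signed term of `Δ_A F^ν` is eventually at most the
corresponding term of `Δ_A F` plus `e`, and `0 ≤ Δ_A F^ν` passes to the limit.
-/

open Filter Set

/-- The vertex of the rectangle `[a,b]` selected by `ε : Fin m → Bool`
(`ε i = true` picks the upper bound `b i`, `ε i = false` the lower bound `a i`). -/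
def vertex {m : ℕ} (a b : Fin m → ℝ) (ε : Fin m → Bool) : Fin m → ℝ :=
  fun i => if ε i then b i else a i

/-- The sign of a vertex: `+1` if the number of coordinates at a lower bound is even,
`−1` if it is odd. -/
def vsign {m : ℕ} (ε : Fin m → Bool) : ℝ :=
  if Even (Finset.univ.filter fun i : Fin m => ε i = false).card then 1 else -1

/-- `Δ_A F = Σ_j sign_A(v_j) F(v_j)` over the 2^m vertices of the rectangle `A = [a,b]`. -/
noncomputable def deltaA {m : ℕ} (a b : Fin m → ℝ) (F : (Fin m → ℝ) → ℝ) : ℝ :=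
  ∑ ε : Fin m → Bool, vsign ε * F (vertex a b ε)

def EquiUpperSemicontinuousWithinAt {X : Type*} [MetricSpace X] (F : ℕ → X → ℝ) (S : Set X)
    (x : X) : Prop :=
  ∀ e > (0 : ℝ), ∃ δ > (0 : ℝ), ∀ ν, ∀ y ∈ S, dist y x ≤ δ → F ν y ≤ F ν x + e

theorem vsign_eq_one_or_eq_neg_one {m : ℕ} (ε : Fin m → Bool) : vsign ε = 1 ∨ vsign ε = -1 := by
  unfold vsign
  split_ifs <;> simp

theorem sum_le_of_eventually_le_add {α ι : Type*} [Fintype ι] {l : Filter α} [l.NeBot]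
    {x : α → ι → ℝ} {y : ι → ℝ} {c : ℝ}
    (hxy : ∀ i, ∀ e > (0 : ℝ), ∀ᶠ n in l, x n i ≤ y i + e)
    (hc : ∀ᶠ n in l, c ≤ ∑ i, x n i) :
    c ≤ ∑ i, y i := by
  refine le_of_forall_pos_le_add fun e he => ?_
  set k : ℝ := Fintype.card ι + 1
  have hk : 0 < k := by positivity
  obtain ⟨n, hcn, hn⟩ :=
    (hc.and (eventually_all.2 fun i => hxy i (e / k) (div_pos he hk))).exists
  calc c ≤ ∑ i, x n i := hcn
    _ ≤ ∑ i, (y i + e / k) := Finset.sum_le_sum fun i _ => hn i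
    _ = ∑ i, y i + Fintype.card ι * (e / k) := by
      rw [Finset.sum_add_distrib, Finset.sum_const, nsmul_eq_mul, Finset.card_univ]
    _ ≤ ∑ i, y i + e := by
      gcongr
      rw [mul_div_assoc', div_le_iff₀ hk]
      nlinarith

namespace HypoConv

variable {X : Type*} [MetricSpace X] {S : Set X} {F : ℕ → X → ℝ} {f : X → ℝ} {x : X}

theorem eventually_le_add (h : HypoConv S F f) (hx : x ∈ S)
    (hbdd : IsBoundedUnder (· ≤ ·) atTop fun ν => F ν x) {e : ℝ} (he : 0 < e) :
    ∀ᶠ ν in atTop, F ν x ≤ f x + e := by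
  have hlimsup := h.1 x hx (fun _ => x) (fun _ => hx) tendsto_const_nhds
  filter_upwards [eventually_lt_of_limsup_lt (b := f x + e) (by linarith) hbdd] with ν hν
  exact hν.le

theorem eventually_sub_le (h : HypoConv S F f) (hx : x ∈ S) {C : ℝ}
    (hC : ∀ ν, ∀ y ∈ S, C ≤ F ν y) (hequi : EquiUpperSemicontinuousWithinAt F S x)
    {e : ℝ} (he : 0 < e) :
    ∀ᶠ ν in atTop, f x - e ≤ F ν x := by
  obtain ⟨xs, hxsS, hxs, hrecovery⟩ := h.2 x hx
  obtain ⟨δ, hδ, hnear⟩ := hequi (e / 2) (half_pos he)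
  have hbdd : IsBoundedUnder (· ≥ ·) atTop fun ν => F ν (xs ν) :=
    isBoundedUnder_of ⟨C, fun ν => hC ν _ (hxsS ν)⟩
  filter_upwards [eventually_lt_of_lt_liminf (b := f x - e / 2) (by linarith) hbdd,
    Metric.tendsto_nhds.1 hxs δ hδ] with ν hlow hclose
  linarith [hnear ν (xs ν) (hxsS ν) hclose.le]

end HypoConv

theorem stmt13_general {m : ℕ} (S : Set (Fin m → ℝ)) (a b : Fin m → ℝ)
    (hvS : ∀ ε : Fin m → Bool, vertex a b ε ∈ S)
    (F : ℕ → (Fin m → ℝ) → ℝ) (Flim : (Fin m → ℝ) → ℝ)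
    (h01 : ∀ ν, ∀ x ∈ S, F ν x ∈ Set.Icc (0 : ℝ) 1)
    (hequi : ∀ ε : Fin m → Bool, vsign ε = -1 →
      ∀ e > (0 : ℝ), ∃ δ > (0 : ℝ), ∀ ν, ∀ x ∈ S,
        ‖x - vertex a b ε‖ ≤ δ → F ν x ≤ F ν (vertex a b ε) + e)
    (hΔ : ∀ ν, 0 ≤ deltaA a b (F ν))
    (hconv : HypoConv S F Flim) :
    0 ≤ deltaA a b Flim := by
  refine sum_le_of_eventually_le_add (l := atTop) (fun ε e he => ?_) (Eventually.of_forall hΔ)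
  rcases vsign_eq_one_or_eq_neg_one ε with hsign | hneg
  · have hbdd : IsBoundedUnder (· ≤ ·) atTop fun ν => F ν (vertex a b ε) :=
      isBoundedUnder_of ⟨1, fun ν => (h01 ν _ (hvS ε)).2⟩
    simpa only [hsign, one_mul] using hconv.eventually_le_add (hvS ε) hbdd he
  · have hequi_ε : EquiUpperSemicontinuousWithinAt F S (vertex a b ε) := fun e he =>
      (hequi ε hneg e he).imp fun _ ⟨hδ, hnear⟩ =>
        ⟨hδ, fun ν y hy hdist => hnear ν y hy (by rwa [← dist_eq_norm])⟩
    filter_upwards [hconv.eventually_sub_le (hvS ε) (fun ν y hy => (h01 ν y hy).1) hequi_ε he]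
      with ν hν
    rw [hneg]
    linarith

/-- Let A = [a,b] be a rectangle in S with vertices v₁,…,v_{2^m} partitioned
into A⁺ (sign +1) and A⁻ (sign −1).  If the usc functions F^ν : S → [0,1] are equi-usc at
every vertex in A⁻, satisfy Δ_A F^ν ≥ 0 for all ν, and hypo-converge to F, then
Δ_A F ≥ 0. -/
theorem stmt13 {m : ℕ} (S : Set (Fin m → ℝ)) (a b : Fin m → ℝ) (hab : ∀ i, a i ≤ b i)
    (hvS : ∀ ε : Fin m → Bool, vertex a b ε ∈ S)
    (F : ℕ → (Fin m → ℝ) → ℝ) (Flim : (Fin m → ℝ) → ℝ)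
    (husc : ∀ ν, UpperSemicontinuousOn (F ν) S)
    (h01 : ∀ ν, ∀ x ∈ S, F ν x ∈ Set.Icc (0 : ℝ) 1)
    (hequi : ∀ ε : Fin m → Bool, vsign ε = -1 →
      ∀ e > (0 : ℝ), ∃ δ > (0 : ℝ), ∀ ν, ∀ x ∈ S,
        ‖x - vertex a b ε‖ ≤ δ → F ν x ≤ F ν (vertex a b ε) + e)
    (hΔ : ∀ ν, 0 ≤ deltaA a b (F ν))
    (hconv : HypoConv S F Flim) :
    0 ≤ deltaA a b Flim :=
  stmt13_general S a b hvS F Flim h01 hequi hΔ hconv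
end

section
/- Let f : S → [0,1] be usc on a compact rectangle S, and let {R^ν} be an infinite refinement of S (box partitions with the refinement property). Define s^ν(x) = max over boxes R_k^ν whose closure contains x of sup_{z ∈ cl R_k^ν} f(z). Then each s^ν is an usc epi-spline of order 0, s^ν ≥ f pointwise, and s^ν hypo-converges to f; in particular the union over ν of order-0 epi-splines is dense in (usc-fcns(S), dl). -/
open Filter Set

/-- The open box `(l₁,u₁) × ⋯ × (l_m,u_m)`. -/
def openBox {m : ℕ} (l u : Fin m → ℝ) : Set (Fin m → ℝ) :=
  {x | ∀ i, l i < x i ∧ x i < u i}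

open Topology Function

/-!
On each closed cell `s^ν` is at least the supremum of `f` over that cell, so `s^ν ≥ f`, and a
point of an open cell lies in no other closed cell, so `s^ν` is constant there. Upper
semicontinuity holds because near `x` only cells containing `x` are met, the cells being finitely
many closed sets. For hypo-convergence, the constant sequence gives the liminf inequality since
`s^ν ≥ f`; for the limsup inequality take `c > f x` and a ball around `x` on which `f < c`: by the
refinement property, for large `ν` every cell meeting a smaller ball lies in this one, so
`s^ν ≤ c` near `x`.
-/

section Boxes

variable {m : ℕ}

lemma closedBox_eq_pi (a b : Fin m → ℝ) : closedBox a b = univ.pi fun i => Icc (a i) (b i) := by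
  ext x
  simp only [closedBox, mem_ofPred_eq, mem_univ_pi, mem_Icc]

lemma openBox_eq_pi (a b : Fin m → ℝ) : openBox a b = univ.pi fun i => Ioo (a i) (b i) := by
  ext x
  simp only [openBox, mem_ofPred_eq, mem_univ_pi, mem_Ioo]

lemma isClosed_closedBox (a b : Fin m → ℝ) : IsClosed (closedBox a b) := by
  rw [closedBox_eq_pi]
  exact isClosed_set_pi fun i _ => isClosed_Icc

lemma isOpen_openBox (a b : Fin m → ℝ) : IsOpen (openBox a b) := by
  rw [openBox_eq_pi]
  exact isOpen_set_pi finite_univ fun i _ => isOpen_Ioo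

lemma closure_openBox {a b : Fin m → ℝ} (hab : ∀ i, a i < b i) :
    closure (openBox a b) = closedBox a b := by
  simp only [openBox_eq_pi, closure_pi_set, closure_Ioo (hab _).ne, closedBox_eq_pi]

end Boxes

lemma setOf_mem_closure_eq_singleton {X ι : Type*} [TopologicalSpace X] {U : ι → Set X}
    (hU : ∀ k, IsOpen (U k)) (hdisj : Pairwise (Disjoint on U)) {x : X} {k : ι} (hx : x ∈ U k) :
    {j | x ∈ closure (U j)} = {k} := by
  ext j
  refine ⟨fun hj => ?_, fun hj => hj ▸ subset_closure hx⟩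
  by_contra hjk
  exact disjoint_left.1 ((hdisj (Ne.symm hjk)).closure_right (hU k)) hx hj

lemma setOf_mem_closedBox_eq_singleton {m : ℕ} {ι : Type*} {l u : ι → Fin m → ℝ}
    (hlu : ∀ k i, l k i < u k i)
    (hdisj : Pairwise fun j k => Disjoint (openBox (l j) (u j)) (openBox (l k) (u k)))
    {x : Fin m → ℝ} {k : ι} (hx : x ∈ openBox (l k) (u k)) :
    {j | x ∈ closedBox (l j) (u j)} = {k} := by
  simpa only [closure_openBox (hlu _)] using
    setOf_mem_closure_eq_singleton (fun j => isOpen_openBox (l j) (u j)) hdisj hx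

section CellwiseSup

variable {X ι : Type*} {f : X → ℝ} {C : ι → Set X}

/-- The epi-spline `s^ν` of the statement, the cells `R_k^ν` being the sets `C k`. -/
noncomputable def cellwiseSup (f : X → ℝ) (C : ι → Set X) (x : X) : ℝ :=
  sSup ((fun k => sSup (f '' C k)) '' {k | x ∈ C k})

lemma le_cellwiseSup [Finite ι] (hbdd : ∀ k, BddAbove (f '' C k)) {x : X} {k : ι}
    (hx : x ∈ C k) : f x ≤ cellwiseSup f C x :=
  (le_csSup (hbdd k) (mem_image_of_mem f hx)).trans <|
    le_csSup (toFinite _).bddAbove (mem_image_of_mem _ hx)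

lemma cellwiseSup_le {x : X} {k : ι} (hx : x ∈ C k) {c : ℝ}
    (hc : ∀ j, x ∈ C j → ∀ z ∈ C j, f z ≤ c) : cellwiseSup f C x ≤ c :=
  csSup_le ⟨_, mem_image_of_mem _ hx⟩ <| forall_mem_image.2 fun j hj =>
    csSup_le ⟨f x, mem_image_of_mem f hj⟩ <| forall_mem_image.2 (hc j hj)

lemma cellwiseSup_eq_of_setOf_mem_eq_singleton {x : X} {k : ι} (hx : {j | x ∈ C j} = {k}) :
    cellwiseSup f C x = sSup (f '' C k) := by
  rw [cellwiseSup, hx, image_singleton, csSup_singleton]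

-- `0 ≤ f` is what makes this work when `y` lies in no cell: then `cellwiseSup f C y = sSup ∅ = 0`.
lemma cellwiseSup_le_cellwiseSup [Finite ι] (hf0 : ∀ k, ∀ z ∈ C k, 0 ≤ f z) {x y : X}
    (h : {j | y ∈ C j} ⊆ {j | x ∈ C j}) : cellwiseSup f C y ≤ cellwiseSup f C x :=
  Real.sSup_le
    (forall_mem_image.2 fun _ hj => le_csSup (toFinite _).bddAbove (mem_image_of_mem _ (h hj)))
    (Real.sSup_nonneg <| forall_mem_image.2 fun j _ => Real.sSup_nonneg <|
      forall_mem_image.2 (hf0 j))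

lemma eventually_setOf_mem_subset [TopologicalSpace X] [Finite ι] (hC : ∀ k, IsClosed (C k))
    (x : X) : ∀ᶠ y in 𝓝 x, {j | y ∈ C j} ⊆ {j | x ∈ C j} := by
  refine (eventually_all.2 fun j => ?_).mono fun y hy j => hy j
  by_cases hx : x ∈ C j
  · exact Eventually.of_forall fun _ _ => hx
  · filter_upwards [(hC j).isOpen_compl.mem_nhds hx] with y hy hyj using absurd hyj hy

lemma upperSemicontinuous_cellwiseSup [TopologicalSpace X] [Finite ι]
    (hC : ∀ k, IsClosed (C k)) (hf0 : ∀ k, ∀ z ∈ C k, 0 ≤ f z) :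
    UpperSemicontinuous (cellwiseSup f C) := fun x _ hc =>
  (eventually_setOf_mem_subset hC x).mono fun _ hy =>
    (cellwiseSup_le_cellwiseSup hf0 hy).trans_lt hc

lemma eventually_cellwiseSup_le [PseudoMetricSpace X] {ι : ℕ → Type*} {S : Set X}
    {C : (ν : ℕ) → ι ν → Set X} (hCS : ∀ ν k, C ν k ⊆ S) (hcover : ∀ ν, S ⊆ ⋃ k, C ν k)
    {x : X} (hrefine : ∀ ε > (0 : ℝ), ∃ ν₀ : ℕ, ∃ δ ∈ Ioo (0 : ℝ) ε, ∀ ν ≥ ν₀, ∀ k,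
      (C ν k ∩ Metric.closedBall x δ).Nonempty → C ν k ⊆ Metric.closedBall x ε)
    (hf : UpperSemicontinuousWithinAt f S x) {c : ℝ} (hc : f x < c) :
    ∀ᶠ p in atTop ×ˢ 𝓝[S] x, cellwiseSup f (C p.1) p.2 ≤ c := by
  obtain ⟨ε, hε, hfε⟩ := Metric.mem_nhdsWithin_iff.1 (hf c hc)
  obtain ⟨ν₀, δ, hδ, hsmall⟩ := hrefine (ε / 2) (half_pos hε)
  filter_upwards [(eventually_ge_atTop ν₀).prod_mk
    (inter_mem_nhdsWithin S (Metric.ball_mem_nhds x hδ.1))]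
  rintro ⟨ν, y⟩ ⟨hν, hyS, hyδ⟩
  obtain ⟨k, hyk⟩ := mem_iUnion.1 (hcover ν hyS)
  refine cellwiseSup_le hyk fun j hyj z hz => (hfε ⟨?_, hCS ν j hz⟩).le
  exact Metric.closedBall_subset_ball (half_lt_self hε)
    (hsmall ν hν j ⟨y, hyj, Metric.ball_subset_closedBall hyδ⟩ hz)

end CellwiseSup

lemma UpperSemicontinuousOn.congr {X β : Type*} [TopologicalSpace X] [Preorder β] {f g : X → β}
    {S : Set X}
    (hf : UpperSemicontinuousOn f S) (hfg : EqOn f g S) : UpperSemicontinuousOn g S :=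
  fun x hx c hc => by
    filter_upwards [hf x hx c ((hfg hx).trans_lt hc), self_mem_nhdsWithin] with y hy hyS
    exact (hfg hyS).symm.trans_lt hy

section HypoConv

variable {X : Type*} [MetricSpace X] {S : Set X} {F G : ℕ → X → ℝ} {f : X → ℝ}

lemma HypoConv.congr (h : HypoConv S F f) (hFG : ∀ ν, EqOn (F ν) (G ν) S) : HypoConv S G f := by
  have hseq : ∀ xs : ℕ → X, (∀ ν, xs ν ∈ S) → (fun ν => F ν (xs ν)) = fun ν => G ν (xs ν) :=
    fun xs hxs => funext fun ν => hFG ν (hxs ν)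
  refine ⟨fun x hx xs hxsS hxs => hseq xs hxsS ▸ h.1 x hx xs hxsS hxs, fun x hx => ?_⟩
  obtain ⟨xs, hxsS, hxs, hlim⟩ := h.2 x hx
  exact ⟨xs, hxsS, hxs, hseq xs hxsS ▸ hlim⟩

lemma hypoConv_of_eventually_le {a b : ℝ} (hF : ∀ ν, ∀ x ∈ S, F ν x ∈ Icc a b)
    (hle : ∀ ν, ∀ x ∈ S, f x ≤ F ν x)
    (hlocal : ∀ x ∈ S, ∀ c > f x, ∀ᶠ p in atTop ×ˢ 𝓝[S] x, F p.1 p.2 ≤ c) :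
    HypoConv S F f := by
  refine ⟨fun x hx xs hxsS hxs => ?_, fun x hx => ⟨fun _ => x, fun _ => hx, tendsto_const_nhds, ?_⟩⟩
  · have hpair : Tendsto (fun ν => (ν, xs ν)) atTop (atTop ×ˢ 𝓝[S] x) :=
      tendsto_id.prodMk (tendsto_nhdsWithin_iff.2 ⟨hxs, Eventually.of_forall hxsS⟩)
    refine le_of_forall_gt_imp_ge_of_dense fun c hc => ?_
    exact limsup_le_of_le (isCoboundedUnder_le_of_le atTop fun ν => (hF ν _ (hxsS ν)).1)
      (hpair.eventually (hlocal x hx c hc))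
  · exact le_liminf_of_le (isCoboundedUnder_ge_of_le atTop fun ν => (hF ν x hx).2)
      (Eventually.of_forall fun ν => hle ν x hx)

end HypoConv

theorem stmt15_general {m : ℕ} (α β : Fin m → ℝ)
    (N : ℕ → ℕ) (l u : (ν : ℕ) → Fin (N ν) → Fin m → ℝ)
    (hnondeg : ∀ ν k, ∀ i, l ν k i < u ν k i)
    (hboxS : ∀ ν k, closedBox (l ν k) (u ν k) ⊆ closedBox α β)
    (hcover : ∀ ν, closedBox α β ⊆ ⋃ k, closedBox (l ν k) (u ν k))
    (hdisj : ∀ ν, ∀ k k', k ≠ k' →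
      Disjoint (openBox (l ν k) (u ν k)) (openBox (l ν k') (u ν k')))
    (hrefine : ∀ x ∈ closedBox α β, ∀ ε > (0 : ℝ), ∃ ν₀ : ℕ, ∃ δ ∈ Set.Ioo (0 : ℝ) ε,
      ∀ ν ≥ ν₀, ∀ k, (closedBox (l ν k) (u ν k) ∩ Metric.closedBall x δ).Nonempty →
        closedBox (l ν k) (u ν k) ⊆ Metric.closedBall x ε)
    (f : (Fin m → ℝ) → ℝ)
    (hf : UpperSemicontinuousOn f (closedBox α β))
    (hf01 : ∀ x ∈ closedBox α β, f x ∈ Set.Icc (0 : ℝ) 1)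
    (s : ℕ → (Fin m → ℝ) → ℝ)
    (hs : ∀ ν, ∀ x ∈ closedBox α β, s ν x =
      sSup ((fun k => sSup (f '' closedBox (l ν k) (u ν k))) ''
        {k : Fin (N ν) | x ∈ closedBox (l ν k) (u ν k)})) :
    (∀ ν, ∀ x ∈ closedBox α β, f x ≤ s ν x) ∧
    (∀ ν, ∀ k, ∃ c : ℝ, ∀ x ∈ openBox (l ν k) (u ν k), s ν x = c) ∧
    (∀ ν, UpperSemicontinuousOn (s ν) (closedBox α β)) ∧
    HypoConv (closedBox α β) s f := by
  set S := closedBox α β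
  set C : (ν : ℕ) → Fin (N ν) → Set (Fin m → ℝ) := fun ν k => closedBox (l ν k) (u ν k)
  have hsC : ∀ ν, EqOn (cellwiseSup f (C ν)) (s ν) S := fun ν x hx => (hs ν x hx).symm
  have hf0 : ∀ ν k, ∀ z ∈ C ν k, 0 ≤ f z := fun ν k z hz => (hf01 z (hboxS ν k hz)).1
  have hf1 : ∀ ν k, ∀ z ∈ C ν k, f z ≤ 1 := fun ν k z hz => (hf01 z (hboxS ν k hz)).2
  have hfs : ∀ ν, ∀ x ∈ S, f x ≤ cellwiseSup f (C ν) x := fun ν x hx =>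
    let ⟨_, hk⟩ := mem_iUnion.1 (hcover ν hx)
    le_cellwiseSup (fun k => ⟨1, forall_mem_image.2 (hf1 ν k)⟩) hk
  have hs01 : ∀ ν, ∀ x ∈ S, cellwiseSup f (C ν) x ∈ Icc 0 1 := fun ν x hx =>
    let ⟨_, hk⟩ := mem_iUnion.1 (hcover ν hx)
    ⟨(hf01 x hx).1.trans (hfs ν x hx), cellwiseSup_le (C := C ν) hk fun j _ => hf1 ν j⟩
  refine ⟨fun ν x hx => hsC ν hx ▸ hfs ν x hx, fun ν k => ⟨sSup (f '' C ν k), fun x hx => ?_⟩,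
    fun ν => ?_, ?_⟩
  · have hxC : x ∈ C ν k := (closure_openBox (hnondeg ν k)).subset (subset_closure hx)
    rw [← hsC ν (hboxS ν k hxC), cellwiseSup_eq_of_setOf_mem_eq_singleton
      (setOf_mem_closedBox_eq_singleton (hnondeg ν) (fun j j' => hdisj ν j j') hx)]
  · exact ((upperSemicontinuous_cellwiseSup (fun k => isClosed_closedBox _ _)
      (hf0 ν)).upperSemicontinuousOn S).congr (hsC ν)
  · refine (hypoConv_of_eventually_le hs01 hfs fun x hx c hc => ?_).congr hsC
    exact eventually_cellwiseSup_le hboxS hcover (hrefine x hx) (hf x hx) hc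

/-- Let f : S → [0,1] be usc on the compact rectangle S = [α,β], and let
{R^ν} be an infinite refinement of S by box partitions.  Define
s^ν(x) = max over boxes whose closure contains x of sup_{cl R_k^ν} f.  Then each s^ν is an
usc epi-spline of order 0 (constant on each open box), s^ν ≥ f pointwise on S, and s^ν
hypo-converges to f; in particular the union over ν of the order-0 epi-splines is dense in
(usc-fcns(S), dl). -/
theorem stmt15 {m : ℕ} (α β : Fin m → ℝ) (hαβ : ∀ i, α i ≤ β i)
    (N : ℕ → ℕ) (l u : (ν : ℕ) → Fin (N ν) → Fin m → ℝ)
    (hnondeg : ∀ ν k, ∀ i, l ν k i < u ν k i)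
    (hboxS : ∀ ν k, closedBox (l ν k) (u ν k) ⊆ closedBox α β)
    (hcover : ∀ ν, closedBox α β ⊆ ⋃ k, closedBox (l ν k) (u ν k))
    (hdisj : ∀ ν, ∀ k k', k ≠ k' →
      Disjoint (openBox (l ν k) (u ν k)) (openBox (l ν k') (u ν k')))
    (hrefine : ∀ x ∈ closedBox α β, ∀ ε > (0 : ℝ), ∃ ν₀ : ℕ, ∃ δ ∈ Set.Ioo (0 : ℝ) ε,
      ∀ ν ≥ ν₀, ∀ k, (closedBox (l ν k) (u ν k) ∩ Metric.closedBall x δ).Nonempty →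
        closedBox (l ν k) (u ν k) ⊆ Metric.closedBall x ε)
    (f : (Fin m → ℝ) → ℝ)
    (hf : UpperSemicontinuousOn f (closedBox α β))
    (hf01 : ∀ x ∈ closedBox α β, f x ∈ Set.Icc (0 : ℝ) 1)
    (s : ℕ → (Fin m → ℝ) → ℝ)
    (hs : ∀ ν, ∀ x ∈ closedBox α β, s ν x =
      sSup ((fun k => sSup (f '' closedBox (l ν k) (u ν k))) ''
        {k : Fin (N ν) | x ∈ closedBox (l ν k) (u ν k)})) :
    (∀ ν, ∀ x ∈ closedBox α β, f x ≤ s ν x) ∧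
    (∀ ν, ∀ k, ∃ c : ℝ, ∀ x ∈ openBox (l ν k) (u ν k), s ν x = c) ∧
    (∀ ν, UpperSemicontinuousOn (s ν) (closedBox α β)) ∧
    HypoConv (closedBox α β) s f :=
  stmt15_general α β N l u hnondeg hboxS hcover hdisj hrefine f hf hf01 s hs
end
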